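/- Let α be a composition (finitely supported sequence of nonnegative integers) with |α| = n, let β be a finitely supported sequence of nonnegative integers with |β| = n − 1, and let σ_β ∈ S_{n−1} be a permutation with cycle type β. Fix i and a subset X ⊆ {1,…,n−1}. If there exists an α−ε_i tabloid t fixed by σ_β with t_i = X, then α_i − 1 = Σ_{j : supp(σ_j) ⊆ X} β_j, where σ_β = ∏_j σ_j is the decomposition into disjoint cycles with |supp(σ_j)| = β_j. -/

import Mathlib

open Finsupp
open scoped Classical

/-- The row index of `k` in the standard tabloid of shape `α`: the least `i` such that
`k < α 0 + ⋯ + α i`. -/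
noncomputable def rowIdx (α : ℕ →₀ ℤ) (k : ℕ) : ℕ := sInf {i | (k : ℤ) < ∑ j ∈ Finset.range (i + 1), α j}

/-- The Young subgroup of `S_n` associated to `α`: the stabilizer of the standard tabloid
whose rows are the consecutive blocks of `{0, …, n-1}` of sizes `α 0, α 1, …`. -/
def youngSubgroup (n : ℕ) (α : ℕ →₀ ℤ) : Subgroup (Equiv.Perm (Fin n)) where
  carrier := {σ | ∀ k : Fin n, rowIdx α (σ k) = rowIdx α k}
  one_mem' := fun _ => rfl
  mul_mem' := by
    intro a b ha hb k
    simpa [Equiv.Perm.mul_apply] using (ha (b k)).trans (hb k)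
  inv_mem' := by
    intro a ha k
    have := ha (a⁻¹ k)
    have hak : a (a⁻¹ k) = k := by simp
    rw [hak] at this
    exact this.symm

/-- The value at `g` of the permutation character of `G` acting on the cosets of `H`:
the number of fixed cosets.  This is the value of the character induced from the
trivial character of `H`. -/
noncomputable def permCharValue {n : ℕ} (H : Subgroup (Equiv.Perm (Fin n)))
    (g : Equiv.Perm (Fin n)) : ℤ :=
  Nat.card {x : Equiv.Perm (Fin n) ⧸ H // g • x = x}

/-- `ξ^α`, as a function on `S_n`: the permutation character induced from the trivial
character of the Young subgroup `S_α` when `α` is nonnegative with `|α| = n`, and `0`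
otherwise. -/
noncomputable def xi (n : ℕ) (α : ℕ →₀ ℤ) (g : Equiv.Perm (Fin n)) : ℤ :=
  if (∀ i, 0 ≤ α i) ∧ (α.sum fun _ v => v) = (n : ℤ) then permCharValue (youngSubgroup n α) g
  else 0

/-- An `α`-tabloid: a sequence of pairwise disjoint subsets of `{0,…,n-1}` with
`|t i| = α i` for every `i`. -/
def IsTabloid (n : ℕ) (α : ℕ →₀ ℤ) (t : ℕ → Finset (Fin n)) : Prop :=
  (∀ i j, i ≠ j → Disjoint (t i) (t j)) ∧ ∀ i, ((t i).card : ℤ) = α i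

/-- The multiset of (nonzero) parts of a finitely supported sequence. -/
def partsOf (β : ℕ →₀ ℕ) : Multiset ℕ := β.support.val.map β

/-- `σ` has cycle type `β` (with `1`s in `β` recording fixed points). -/
def HasCycleType {n : ℕ} (σ : Equiv.Perm (Fin n)) (β : ℕ →₀ ℕ) : Prop :=
  (β.sum fun _ v => v) = n ∧ σ.cycleType = Multiset.filter (fun k => 2 ≤ k) (partsOf β)

/-- A nonnegative sequence regarded as an integer sequence. -/
noncomputable def natToZ (β : ℕ →₀ ℕ) : ℕ →₀ ℤ := Finsupp.mapRange Int.ofNat rfl β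

/-- The virtual character `χ^α = ∑_{σ ∈ S_l} sgn σ · ξ^{α + σ - id_l}` (0-indexed,
the sequence `α + σ - id_l` has `i`-th entry `α i + σ i - i`). -/
noncomputable def chi (n l : ℕ) (α : ℕ →₀ ℤ) (g : Equiv.Perm (Fin n)) : ℤ :=
  ∑ σ : Equiv.Perm (Fin l),
    (Equiv.Perm.sign σ : ℤ) *
      xi n (α + ∑ i : Fin l, Finsupp.single (i : ℕ) (((σ i : ℕ) : ℤ) - (i : ℕ))) g

/-- `ζ^α`, the irreducible character of `S_n` corresponding to the partition `α` of `n`,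
given by the determinantal formula `ζ^α = χ^α` (with `l = n ≥ l(α)`). -/
noncomputable def zeta (n : ℕ) (α : ℕ →₀ ℕ) (g : Equiv.Perm (Fin n)) : ℤ :=
  chi n n (natToZ α) g

/-- `α` is a partition of `n`: weakly decreasing with `|α| = n`. -/
def IsPartitionOf (α : ℕ →₀ ℕ) (n : ℕ) : Prop :=
  (∀ i, α (i + 1) ≤ α i) ∧ (α.sum fun _ v => v) = n

/-! A `σ`-invariant set that meets a cycle of `σ` contains the whole cycle. Since `σ` acts on
each `S j` as the cycle `f j`, the row `X = t i` is a union of some of the disjoint sets `S j`,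
which cover `Fin N`; counting `X` in two ways gives `α i - 1 = ∑ β j` over those `j`. -/

namespace Equiv.Perm

variable {α ι : Type*}

theorem noncommProd_apply_of_forall_ne_apply_eq {s : Finset ι} {f : ι → Perm α}
    (comm : (s : Set ι).Pairwise fun a b => Commute (f a) (f b)) {j : ι} (hj : j ∈ s) {x : α}
    (hx : ∀ k ∈ s, k ≠ j → f k x = x) : s.noncommProd f comm x = f j x := by
  rw [← Finset.mul_noncommProd_erase s hj f comm, mul_apply]
  congr 1
  refine Finset.noncommProd_induction _ _ _ (fun g : Perm α => g x = x) ?_ rfl ?_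
  · intro a b ha hb
    rw [mul_apply, hb, ha]
  · intro k hk
    exact hx k (Finset.mem_of_mem_erase hk) (Finset.ne_of_mem_erase hk)

theorem IsCycleOn.subset_of_mapsTo [Finite α] {g σ : Perm α} {C X : Set α} (hg : g.IsCycleOn C)
    (hσg : ∀ x ∈ C, σ x = g x) (hX : Set.MapsTo σ X X) {x : α} (hxC : x ∈ C) (hxX : x ∈ X) :
    C ⊆ X := by
  have hinv : Set.MapsTo g (C ∩ X) (C ∩ X) := fun y ⟨hyC, hyX⟩ =>
    ⟨hg.apply_mem_iff.2 hyC, hσg y hyC ▸ hX hyX⟩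
  intro y hyC
  obtain ⟨m, -, rfl⟩ := (hg.2 hxC hyC).exists_pow_eq'
  rw [coe_pow]
  exact (hinv.iterate m ⟨hxC, hxX⟩).2

end Equiv.Perm

namespace Finset

variable {α ι : Type*} [DecidableEq α]

theorem biUnion_eq_univ_of_sum_card_eq [Fintype α] {s : Finset ι} {S : ι → Finset α}
    (hS : (s : Set ι).PairwiseDisjoint S) (hcard : ∑ j ∈ s, (S j).card = Fintype.card α) :
    s.biUnion S = univ :=
  eq_univ_of_card _ (by rw [card_biUnion hS, hcard])

theorem card_eq_sum_card_filter_subset {s : Finset ι} {S : ι → Finset α} {X : Finset α}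
    (hS : (s : Set ι).PairwiseDisjoint S) (hcover : X ⊆ s.biUnion S)
    (hblock : ∀ j ∈ s, ∀ x ∈ S j, x ∈ X → S j ⊆ X) :
    #X = ∑ j ∈ s with S j ⊆ X, #(S j) := by
  have hX : X = (s.filter fun j => S j ⊆ X).biUnion S := by
    ext x
    refine ⟨fun hx => ?_, fun hx => ?_⟩
    · obtain ⟨j, hj, hxj⟩ := mem_biUnion.1 (hcover hx)
      exact mem_biUnion.2 ⟨j, mem_filter.2 ⟨hj, hblock j hj x hxj hx⟩, hxj⟩
    · obtain ⟨j, hj, hxj⟩ := mem_biUnion.1 hx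
      exact (mem_filter.1 hj).2 hxj
  conv_lhs => rw [hX]
  exact card_biUnion (hS.subset (filter_subset _ _))

end Finset

theorem stmt2_general (N : ℕ) (α : ℕ →₀ ℤ)
    (β : ℕ →₀ ℕ) (hβsum : (β.sum fun _ v => v) = N)
    (f : ℕ → Equiv.Perm (Fin N)) (S : ℕ → Finset (Fin N))
    (hcomm : (β.support : Set ℕ).Pairwise fun a b => Commute (f a) (f b))
    (σ : Equiv.Perm (Fin N)) (hσ : σ = β.support.noncommProd f hcomm)
    (hcard : ∀ j, (S j).card = β j)
    (hcyc : ∀ j, (f j).IsCycleOn (S j : Set (Fin N)))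
    (hfix : ∀ j x, x ∉ S j → f j x = x)
    (hdisj : ∀ j k, j ≠ k → Disjoint (S j) (S k))
    (i : ℕ) (X : Finset (Fin N))
    (hne : ∃ t : ℕ → Finset (Fin N),
      IsTabloid N (α - Finsupp.single i 1) t ∧ (∀ k, (t k).image σ = t k) ∧ t i = X) :
    α i - 1 = ∑ j ∈ β.support.filter (fun j => S j ⊆ X), (β j : ℤ) := by
  obtain ⟨t, htab, hinv, rfl⟩ := hne
  have hS : (β.support : Set ℕ).PairwiseDisjoint S := fun j _ k _ hjk => hdisj j k hjk
  have hσf : ∀ j ∈ β.support, ∀ x ∈ S j, σ x = f j x := fun j hj x hx =>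
    hσ ▸ Equiv.Perm.noncommProd_apply_of_forall_ne_apply_eq hcomm hj fun k _ hkj =>
      hfix k x (Finset.disjoint_left.1 (hdisj j k hkj.symm) hx)
  have hmaps : Set.MapsTo σ (t i : Set (Fin N)) (t i) := fun x hx => by
    rw [Finset.mem_coe, ← hinv i]
    exact Finset.mem_image_of_mem σ hx
  have hcover : β.support.biUnion S = Finset.univ :=
    Finset.biUnion_eq_univ_of_sum_card_eq hS (by simpa [hcard, Finsupp.sum] using hβsum)
  have hti := Finset.card_eq_sum_card_filter_subset hS (hcover ▸ Finset.subset_univ _)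
    fun j hj x hxS hxX => Finset.coe_subset.1 <|
      (hcyc j).subset_of_mapsTo (hσf j hj) hmaps (Finset.mem_coe.2 hxS) hxX
  have htabi : ((t i).card : ℤ) = α i - 1 := by simpa using htab.2 i
  rw [← htabi, hti]
  push_cast [hcard]
  rfl

/-- If some `(α - ε i)`-tabloid `t` with `t i = X` is fixed by a permutation `σ` of `S_{n-1}`
of cycle type `β`, then `α i - 1` equals the sum of `β j` over those cycles whose support is
contained in `X`. -/
theorem stmt2 (N : ℕ) (α : ℕ →₀ ℤ) (hαpos : ∀ i, 0 ≤ α i)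
    (hαsum : (α.sum fun _ v => v) = ((N + 1 : ℕ) : ℤ))
    (β : ℕ →₀ ℕ) (hβsum : (β.sum fun _ v => v) = N)
    (f : ℕ → Equiv.Perm (Fin N)) (S : ℕ → Finset (Fin N))
    (hcomm : (β.support : Set ℕ).Pairwise fun a b => Commute (f a) (f b))
    (σ : Equiv.Perm (Fin N)) (hσ : σ = β.support.noncommProd f hcomm)
    (hcard : ∀ j, (S j).card = β j)
    (hcyc : ∀ j, (f j).IsCycleOn (S j : Set (Fin N)))
    (hfix : ∀ j x, x ∉ S j → f j x = x)
    (hdisj : ∀ j k, j ≠ k → Disjoint (S j) (S k))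
    (i : ℕ) (X : Finset (Fin N))
    (hne : ∃ t : ℕ → Finset (Fin N),
      IsTabloid N (α - Finsupp.single i 1) t ∧ (∀ k, (t k).image σ = t k) ∧ t i = X) :
    α i - 1 = ∑ j ∈ β.support.filter (fun j => S j ⊆ X), (β j : ℤ) :=
  stmt2_general N α β hβsum f S hcomm σ hσ hcard hcyc hfix hdisj i X hne
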